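/- Smooth entropy reformulation: for any probability distribution p on a countable set and any ε ∈ (0,1), ε · H_0^ε(p) ≤ H(p), where H_0^ε(p) = min{ log|supp q| : q a subnormalized distribution with ∑_j min(p_j,q_j) ≥ 1−ε, q ≤ p } is realized in particular by keeping the M = ⌈exp(H(p)/ε)⌉ largest entries of p. -/

import Mathlib

open Real

/-
For non-increasing `p` of total mass one, `(j + 1) p_j ≤ 1`, so every entry beyond the first `n`
has `-log p_j ≥ log (n + 1)`. The mass of that tail, weighted by `log (n + 1)`, is therefore
at most the entropy `H`; for `n = ⌈exp (H / ε)⌉` we have `log (n + 1) ≥ H / ε`, which forces the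
tail mass below `ε`.
-/

lemma Antitone.succ_mul_le_of_hasSum {p : ℕ → ℝ} {s : ℝ} (hmono : Antitone p)
    (hnn : ∀ j, 0 ≤ p j) (hsum : HasSum p s) (j : ℕ) : ((j : ℝ) + 1) * p j ≤ s :=
  calc ((j : ℝ) + 1) * p j = ∑ _i ∈ Finset.range (j + 1), p j := by simp
    _ ≤ ∑ i ∈ Finset.range (j + 1), p i :=
      Finset.sum_le_sum fun _ hi => hmono (Nat.lt_succ_iff.mp (Finset.mem_range.mp hi))
    _ ≤ s := sum_le_hasSum _ (fun i _ => hnn i) hsum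

lemma Real.mul_log_le_negMulLog {x a : ℝ} (hx : 0 ≤ x) (ha : 0 < a) (hxa : x * a ≤ 1) :
    x * log a ≤ negMulLog x := by
  rcases hx.eq_or_lt with rfl | hx
  · simp
  have ha_le : a ≤ x⁻¹ := by rw [← one_div, le_div_iff₀ hx]; linarith
  calc x * log a ≤ x * log x⁻¹ := by gcongr
    _ = negMulLog x := by rw [log_inv, negMulLog]; ring

section

variable {p : ℕ → ℝ} (hmono : Antitone p) (hnn : ∀ j, 0 ≤ p j) (hsum : HasSum p 1)
include hmono hnn hsum

lemma tsum_nat_add_mul_log_le_entropy (hent : Summable fun j => negMulLog (p j)) (n : ℕ) :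
    (∑' j, p (j + n)) * log (n + 1) ≤ ∑' j, negMulLog (p j) := by
  have htail (j : ℕ) : p (j + n) * ((n : ℝ) + 1) ≤ 1 := by
    calc p (j + n) * ((n : ℝ) + 1) ≤ (((j + n : ℕ) : ℝ) + 1) * p (j + n) := by
          rw [mul_comm]; gcongr; exacts [hnn _, by simp]
      _ ≤ 1 := hmono.succ_mul_le_of_hasSum hnn hsum _
  calc (∑' j, p (j + n)) * log (n + 1) = ∑' j, p (j + n) * log (n + 1) := tsum_mul_right.symm
    _ ≤ ∑' j, negMulLog (p (j + n)) :=
      Summable.tsum_le_tsum (fun j => mul_log_le_negMulLog (hnn _) (by positivity) (htail j))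
        (((summable_nat_add_iff n).mpr hsum.summable).mul_right _)
        ((summable_nat_add_iff n).mpr hent)
    _ ≤ ∑' j, negMulLog (p j) := by
      rw [← hent.sum_add_tsum_nat_add n]
      exact le_add_of_nonneg_left
        (Finset.sum_nonneg fun j _ => negMulLog_nonneg (hnn j) (le_hasSum hsum j fun i _ => hnn i))

lemma one_sub_le_sum_range_of_entropy_le (hent : Summable fun j => negMulLog (p j)) {ε : ℝ}
    {n : ℕ} (hn : 0 < n) (hH : ∑' j, negMulLog (p j) ≤ ε * log (n + 1)) :
    1 - ε ≤ ∑ j ∈ Finset.range n, p j := by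
  have hlog : 0 < log ((n : ℝ) + 1) := log_pos (by norm_cast; omega)
  have htail : ∑' j, p (j + n) ≤ ε :=
    le_of_mul_le_mul_right ((tsum_nat_add_mul_log_le_entropy hmono hnn hsum hent n).trans hH) hlog
  linarith [hsum.summable.sum_add_tsum_nat_add n, hsum.tsum_eq]

end

lemma Real.log_natCeil_exp_le {x : ℝ} (hx : 0 ≤ x) : log ⌈exp x⌉₊ ≤ x + 1 := by
  have hexp_x : 1 ≤ exp x := one_le_exp hx
  have hexp_one : 2 ≤ exp 1 := by linarith [add_one_le_exp 1]
  -- `⌈y⌉₊ < y + 1 ≤ 2 y ≤ e y` once `y ≥ 1`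
  rw [log_le_iff_le_exp (Nat.cast_pos.mpr (Nat.ceil_pos.mpr (exp_pos x))), exp_add]
  nlinarith [Nat.ceil_lt_add_one (exp_pos x).le]

theorem smooth_entropy_bound_general
    (p : ℕ → ℝ) (ε : ℝ) (hε0 : 0 < ε)
    (hnn : ∀ j, 0 ≤ p j)
    (hmono : Antitone p)
    (hsum : HasSum p 1)
    (hent : Summable (fun j => p j * Real.log (p j))) :
    1 - ε ≤ ∑ j ∈ Finset.range ⌈Real.exp ((-∑' j, p j * Real.log (p j)) / ε)⌉₊, p j
    ∧ Real.log (⌈Real.exp ((-∑' j, p j * Real.log (p j)) / ε)⌉₊ : ℝ)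
        ≤ (-∑' j, p j * Real.log (p j)) / ε + 1 := by
  have hentropy : -∑' j, p j * log (p j) = ∑' j, negMulLog (p j) := by
    simp [negMulLog_eq_neg, tsum_neg]
  have hent' : Summable fun j => negMulLog (p j) := by simpa [negMulLog_eq_neg] using hent.neg
  rw [hentropy]
  set H := ∑' j, negMulLog (p j)
  have hH_nonneg : 0 ≤ H :=
    tsum_nonneg fun j => negMulLog_nonneg (hnn j) (le_hasSum hsum j fun i _ => hnn i)
  have hM_pos : 0 < ⌈exp (H / ε)⌉₊ := Nat.ceil_pos.mpr (exp_pos _)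
  have hH_le : H ≤ ε * log (⌈exp (H / ε)⌉₊ + 1) := by
    rw [← div_le_iff₀' hε0, le_log_iff_exp_le (by positivity)]
    linarith [Nat.le_ceil (exp (H / ε))]
  exact ⟨one_sub_le_sum_range_of_entropy_le hmono hnn hsum hent' hM_pos hH_le,
    log_natCeil_exp_le (div_nonneg hH_nonneg hε0.le)⟩

/-- Smooth entropy reformulation `ε·H₀^ε(p) ≤ H(p)`. For a
probability mass function `p` on ℕ with finite Shannon entropy
`H(p) = −∑' j, p j log (p j)` (entries ordered non-increasingly) and
`ε ∈ (0,1)`, keeping the top `M = ⌈exp(H(p)/ε)⌉` entries of `p` yields a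
subnormalized distribution `q ≤ p` of support size `M` with
`∑_{j<M} p j ≥ 1 − ε`; hence the smoothed max-entropy satisfies
`H₀^ε(p) ≤ log M ≤ H(p)/ε + 1`. -/
theorem smooth_entropy_bound
    (p : ℕ → ℝ) (ε : ℝ) (hε0 : 0 < ε) (hε1 : ε < 1)
    (hnn : ∀ j, 0 ≤ p j)
    (hmono : Antitone p)
    (hsum : HasSum p 1)
    (hent : Summable (fun j => p j * Real.log (p j))) :
    1 - ε ≤ ∑ j ∈ Finset.range ⌈Real.exp ((-∑' j, p j * Real.log (p j)) / ε)⌉₊, p j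
    ∧ Real.log (⌈Real.exp ((-∑' j, p j * Real.log (p j)) / ε)⌉₊ : ℝ)
        ≤ (-∑' j, p j * Real.log (p j)) / ε + 1 :=
  smooth_entropy_bound_general p ε hε0 hnn hmono hsum hent
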